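/- Let g : [0,∞) → [0,∞) be continuous with compact support, g(0) = 0, g not identically zero. For s,t ≥ 0 set m_g(s,t) = inf_{r∈[s∧t, s∨t]} g(r) and d_g(s,t) = g(s) + g(t) − 2 m_g(s,t). Then d_g is a pseudometric on [0,∞), and the quotient metric space T_g = [0,∞)/∼ (where s ∼ t iff d_g(s,t)=0), rooted at the class of 0, is a rooted real tree: for every σ₁, σ₂ ∈ T_g there is a unique isometric map f : [0, d_g(σ₁,σ₂)] → T_g with f(0) = σ₁ and f(d_g(σ₁,σ₂)) = σ₂, and every continuous injective map q : [0,1] → T_g with q(0)=σ₁, q(1)=σ₂ has range equal to the range of f. -/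
import Mathlib


/-!
STATEMENT 3.  Let `g : [0,∞) → [0,∞)` be continuous with compact support,
`g(0) = 0`, `g` not identically zero.  With
`m_g(s,t) = inf_{r ∈ [s∧t, s∨t]} g(r)` and `d_g(s,t) = g(s) + g(t) - 2 m_g(s,t)`,
`d_g` is a pseudometric on `[0,∞)` and the quotient metric space
`T_g = [0,∞)/∼` (where `s ∼ t` iff `d_g(s,t) = 0`), rooted at the class of `0`,
is a rooted real tree.

The statement about the quotient space is expressed directly in terms of the
pseudometric `d_g` on representatives, `a ∼ b` being `d_g a b = 0`:

* (existence of geodesics) for all `a b ∈ [0,∞)` there is a map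
  `f : [0, d_g(a,b)] → [0,∞)` with `f 0 ∼ a`, `f (d_g(a,b)) ∼ b`, which is isometric
  for `d_g`;
* (uniqueness) any two such maps agree up to `∼` pointwise — this is exactly
  uniqueness of the isometric map between the corresponding points of `T_g`;
* (arcs) any injective-after-quotienting continuous map `q : [0,1] → T_g`
  with `q 0 ∼ a`, `q 1 ∼ b` has the same range as `f`, up to `∼`.
-/

noncomputable section

/-- `m_g(s,t)`. -/
noncomputable def mExc (g : ℝ → ℝ) (s t : ℝ) : ℝ :=
  sInf (g '' Set.Icc (min s t) (max s t))

/-- `d_g(s,t)`. -/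
noncomputable def dExc (g : ℝ → ℝ) (s t : ℝ) : ℝ :=
  g s + g t - 2 * mExc g s t

section Basic

variable {g : ℝ → ℝ}

lemma ct_bddBelow (hcont : Continuous g) (s t : ℝ) :
    BddBelow (g '' Set.Icc (min s t) (max s t)) :=
  (isCompact_Icc.image hcont).bddBelow

lemma ct_nonempty (s t : ℝ) : (g '' Set.Icc (min s t) (max s t)).Nonempty :=
  (Set.nonempty_Icc.2 (min_le_max)).image _

lemma mExc_le (hcont : Continuous g) {s t r : ℝ}
    (hr : r ∈ Set.Icc (min s t) (max s t)) : mExc g s t ≤ g r :=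
  csInf_le (ct_bddBelow hcont s t) ⟨r, hr, rfl⟩

lemma mExc_le_left (hcont : Continuous g) (s t : ℝ) : mExc g s t ≤ g s :=
  mExc_le hcont ⟨min_le_left _ _, le_max_left _ _⟩

lemma mExc_le_right (hcont : Continuous g) (s t : ℝ) : mExc g s t ≤ g t :=
  mExc_le hcont ⟨min_le_right _ _, le_max_right _ _⟩

lemma le_mExc {s t c : ℝ} (h : ∀ r ∈ Set.Icc (min s t) (max s t), c ≤ g r) :
    c ≤ mExc g s t :=
  le_csInf (ct_nonempty s t) (by rintro v ⟨u, hu, rfl⟩; exact h u hu)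

lemma mExc_attain (hcont : Continuous g) (s t : ℝ) :
    ∃ r ∈ Set.Icc (min s t) (max s t), g r = mExc g s t := by
  obtain ⟨r, hr, hmin⟩ := isCompact_Icc.exists_isMinOn
    (Set.nonempty_Icc.2 (min_le_max : min s t ≤ max s t)) hcont.continuousOn
  refine ⟨r, hr, le_antisymm ?_ (mExc_le hcont hr)⟩
  exact le_mExc fun u hu => hmin hu

lemma mExc_comm (s t : ℝ) : mExc g s t = mExc g t s := by
  rw [mExc, mExc, min_comm, max_comm]

lemma mExc_self (s : ℝ) : mExc g s s = g s := by
  rw [mExc, min_self, max_self, Set.Icc_self, Set.image_singleton, csInf_singleton]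

lemma dExc_self (s : ℝ) : dExc g s s = 0 := by
  rw [dExc, mExc_self]; ring

lemma dExc_comm (s t : ℝ) : dExc g s t = dExc g t s := by
  rw [dExc, dExc, mExc_comm]; ring

lemma dExc_nonneg (hcont : Continuous g) (s t : ℝ) : 0 ≤ dExc g s t := by
  have h1 := mExc_le_left hcont s t
  have h2 := mExc_le_right hcont s t
  rw [dExc]; linarith

lemma mExc_min_le (hcont : Continuous g) (x y z : ℝ) :
    min (mExc g x y) (mExc g y z) ≤ mExc g x z := by
  obtain ⟨r, hr, hgr⟩ := mExc_attain hcont x z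
  have hmem : r ∈ Set.Icc (min x y) (max x y) ∨ r ∈ Set.Icc (min y z) (max y z) := by
    rcases le_total r y with h | h
    · rcases min_le_iff.1 hr.1 with h' | h'
      · exact Or.inl ⟨le_trans (min_le_left _ _) h', le_trans h (le_max_right _ _)⟩
      · exact Or.inr ⟨le_trans (min_le_right _ _) h', le_trans h (le_max_left _ _)⟩
    · rcases le_max_iff.1 hr.2 with h' | h'
      · exact Or.inl ⟨le_trans (min_le_right _ _) h, le_trans h' (le_max_left _ _)⟩
      · exact Or.inr ⟨le_trans (min_le_left _ _) h, le_trans h' (le_max_right _ _)⟩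
  rcases hmem with hm | hm
  · exact le_trans (min_le_left _ _) (hgr ▸ mExc_le hcont hm)
  · exact le_trans (min_le_right _ _) (hgr ▸ mExc_le hcont hm)

lemma dExc_triangle (hcont : Continuous g) (x y z : ℝ) :
    dExc g x z ≤ dExc g x y + dExc g y z := by
  have h := mExc_min_le hcont x y z
  have h1 := mExc_le_right hcont x y
  have h2 := mExc_le_left hcont y z
  rcases min_le_iff.1 (le_refl (min (mExc g x y) (mExc g y z))) with _ | _ <;>
  · rcases le_total (mExc g x y) (mExc g y z) with hm | hm
    · rw [min_eq_left hm] at h; simp only [dExc]; linarith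
    · rw [min_eq_right hm] at h; simp only [dExc]; linarith

lemma mExc_mono (hcont : Continuous g) {s t s' t' : ℝ}
    (h1 : min s' t' ≤ min s t) (h2 : max s t ≤ max s' t') :
    mExc g s' t' ≤ mExc g s t := by
  obtain ⟨r, hr, hgr⟩ := mExc_attain hcont s t
  exact hgr ▸ mExc_le hcont ⟨le_trans h1 hr.1, le_trans hr.2 h2⟩

lemma mExc_split (hcont : Continuous g) {x y z : ℝ}
    (hy : y ∈ Set.Icc (min x z) (max x z)) :
    mExc g x z = min (mExc g x y) (mExc g y z) := by
  refine le_antisymm (le_min ?_ ?_) (mExc_min_le hcont x y z)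
  · exact mExc_mono hcont (le_min (min_le_left _ _) hy.1) (max_le (le_max_left _ _) hy.2)
  · exact mExc_mono hcont (le_min hy.1 (min_le_right _ _)) (max_le hy.2 (le_max_right _ _))

lemma four_core (hcont : Continuous g) {x y a b : ℝ}
    (hxy : x ≤ y) (hab : a ≤ b) (hxa : x ≤ a) :
    min (mExc g x a + mExc g y b) (mExc g x b + mExc g y a) ≤
      mExc g x y + mExc g a b := by
  rcases le_total y a with hya | hya
  · -- x ≤ y ≤ a ≤ b
    have h1 : mExc g x a ≤ mExc g x y :=
      mExc_mono hcont (le_min (min_le_left _ _) (le_trans (min_le_left _ _) hxy))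
        (max_le (le_max_left _ _) (le_trans hya (le_max_right _ _)))
    have h2 : mExc g y b ≤ mExc g a b :=
      mExc_mono hcont (le_min (by simp [min_le_iff]; left; exact hya) (min_le_right _ _))
        (max_le (le_trans hab (le_max_right _ _)) (le_max_right _ _))
    calc min _ _ ≤ mExc g x a + mExc g y b := min_le_left _ _
      _ ≤ mExc g x y + mExc g a b := by linarith
  · rcases le_total y b with hyb | hyb
    · -- x ≤ a ≤ y ≤ b
      set p := mExc g x a with hp
      set q := mExc g a y with hq
      set r := mExc g y b with hr
      have e1 : mExc g x y = min p q := mExc_split hcont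
        ⟨le_trans (min_le_left _ _) hxa, le_trans hya (le_max_right _ _)⟩
      have e2 : mExc g a b = min q r := mExc_split hcont
        ⟨le_trans (min_le_left _ _) hya, le_trans hyb (le_max_right _ _)⟩
      have e3 : mExc g x b = min p (mExc g a b) := mExc_split hcont
        ⟨le_trans (min_le_left _ _) hxa, le_trans hab (le_max_right _ _)⟩
      have e4 : mExc g y a = q := mExc_comm y a
      rw [e1, e2, e3, e4, e2]
      rcases le_total p q with h1 | h1 <;> rcases le_total q r with h2 | h2 <;>
        rcases le_total p r with h3 | h3 <;>
        simp only [min_def] <;> split_ifs <;> linarith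
    · -- x ≤ a ≤ b ≤ y
      set p := mExc g x a with hp
      set q := mExc g a b with hq
      set r := mExc g b y with hr
      have eay : mExc g a y = min q r := mExc_split hcont
        ⟨le_trans (min_le_left _ _) hab, le_trans hyb (le_max_right _ _)⟩
      have e1 : mExc g x y = min p (min q r) := by
        rw [mExc_split hcont (y := a)
          ⟨le_trans (min_le_left _ _) hxa, le_trans (le_trans hab hyb) (le_max_right _ _)⟩, eay]
      have e2 : mExc g x b = min p q := mExc_split hcont
        ⟨le_trans (min_le_left _ _) hxa, le_trans hab (le_max_right _ _)⟩
      have e3 : mExc g y b = r := (mExc_comm y b).trans rfl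
      have e4 : mExc g y a = min q r := (mExc_comm y a).trans eay
      rw [e1, e2, e3, e4]
      rcases le_total p q with h1 | h1 <;> rcases le_total q r with h2 | h2 <;>
        rcases le_total p r with h3 | h3 <;>
        simp only [min_def] <;> split_ifs <;> linarith

lemma four_point_m (hcont : Continuous g) (x y a b : ℝ) :
    min (mExc g x a + mExc g y b) (mExc g x b + mExc g y a) ≤
      mExc g x y + mExc g a b := by
  have H : ∀ x y a b : ℝ, x ≤ y → a ≤ b →
      min (mExc g x a + mExc g y b) (mExc g x b + mExc g y a) ≤
        mExc g x y + mExc g a b := by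
    intro x y a b hxy hab
    rcases le_total x a with h | h
    · exact four_core hcont hxy hab h
    · have := four_core hcont hab hxy h
      rw [mExc_comm a x, mExc_comm b y, mExc_comm a y, mExc_comm b x] at this
      have e : min (mExc g x a + mExc g y b) (mExc g x b + mExc g y a)
          = min (mExc g x a + mExc g y b) (mExc g y a + mExc g x b) := by
        rw [add_comm (mExc g x b)]
      rw [e]; linarith [this]
  rcases le_total x y with h1 | h1 <;> rcases le_total a b with h2 | h2
  · exact H x y a b h1 h2
  · have := H x y b a h1 h2
    rw [mExc_comm b a] at this
    rw [min_comm] at this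
    linarith [this]
  · have := H y x a b h1 h2
    rw [mExc_comm y x] at this
    have e : min (mExc g y a + mExc g x b) (mExc g y b + mExc g x a)
        = min (mExc g x b + mExc g y a) (mExc g x a + mExc g y b) := by
      rw [add_comm (mExc g y a), add_comm (mExc g y b)]
    rw [e, min_comm] at this
    linarith [this]
  · have := H y x b a h1 h2
    rw [mExc_comm y x, mExc_comm b a] at this
    have e : min (mExc g y b + mExc g x a) (mExc g y a + mExc g x b)
        = min (mExc g x a + mExc g y b) (mExc g x b + mExc g y a) := by
      rw [add_comm (mExc g y b), add_comm (mExc g y a)]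
    rw [e] at this
    linarith [this]

lemma four_point_d (hcont : Continuous g) (x y a b : ℝ) :
    dExc g x y + dExc g a b ≤
      max (dExc g x a + dExc g y b) (dExc g x b + dExc g y a) := by
  have h := four_point_m hcont x y a b
  rcases le_total (mExc g x a + mExc g y b) (mExc g x b + mExc g y a) with h1 | h1
  · rw [min_eq_left h1] at h
    refine le_max_of_le_left ?_
    simp only [dExc]; linarith
  · rw [min_eq_right h1] at h
    refine le_max_of_le_right ?_
    simp only [dExc]; linarith

lemma dExc_transfer (hcont : Continuous g) {x x' : ℝ} (y : ℝ)
    (h : dExc g x x' = 0) : dExc g x y = dExc g x' y := by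
  have t1 := dExc_triangle hcont x x' y
  have t2 := dExc_triangle hcont x' x y
  rw [dExc_comm x' x] at t2
  linarith

lemma level_point (hcont : Continuous g) {lo hi h : ℝ}
    (hex : ∃ r, r ∈ Set.Icc lo hi ∧ g r ≤ h) (hhi : h ≤ g hi) :
    sSup {r | r ∈ Set.Icc lo hi ∧ g r ≤ h} ∈ Set.Icc lo hi ∧
    g (sSup {r | r ∈ Set.Icc lo hi ∧ g r ≤ h}) = h ∧
    ∀ u, sSup {r | r ∈ Set.Icc lo hi ∧ g r ≤ h} ≤ u → u ≤ hi → h ≤ g u := by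
  set S := {r | r ∈ Set.Icc lo hi ∧ g r ≤ h} with hS
  have hclosed : IsClosed S := by
    have : S = Set.Icc lo hi ∩ {r | g r ≤ h} := rfl
    rw [this]
    exact isClosed_Icc.inter (isClosed_le hcont continuous_const)
  have hbdd : BddAbove S := ⟨hi, fun r hr => hr.1.2⟩
  have hne : S.Nonempty := hex
  have hxS : sSup S ∈ S := hclosed.csSup_mem hne hbdd
  set x := sSup S with hx
  have hgt : ∀ u, x < u → u ≤ hi → h < g u := by
    intro u hu1 hu2
    by_contra hc
    push_neg at hc
    exact absurd (le_csSup hbdd ⟨⟨le_trans hxS.1.1 hu1.le, hu2⟩, hc⟩) (not_le.2 hu1)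
  have hgx : g x = h := by
    rcases eq_or_lt_of_le hxS.1.2 with he | hl
    · exact le_antisymm hxS.2 (by rw [he]; exact hhi)
    · refine le_antisymm hxS.2 ?_
      by_contra hc
      push_neg at hc
      have hopen : IsOpen {r | g r < h} := isOpen_lt hcont continuous_const
      obtain ⟨ε, hε, hball⟩ := Metric.isOpen_iff.1 hopen x hc
      set u := min hi (x + ε / 2) with hu
      have hxu : x < u := lt_min hl (by linarith)
      have huhi : u ≤ hi := min_le_left _ _
      have hmem : u ∈ Metric.ball x ε := by
        rw [Metric.mem_ball, Real.dist_eq, abs_of_nonneg (by linarith : (0:ℝ) ≤ u - x)]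
        have : u ≤ x + ε / 2 := min_le_right _ _
        linarith
      exact absurd (hball hmem) (not_lt.2 (hgt u hxu huhi).le)
  refine ⟨hxS.1, hgx, fun u h1 h2 => ?_⟩
  rcases eq_or_lt_of_le h1 with he | hl
  · rw [← he, hgx]
  · exact (hgt u hl h2).le

lemma geodesic_exists (hcont : Continuous g) (hnonneg : ∀ x, 0 ≤ x → 0 ≤ g x)
    (h0 : g 0 = 0) {a b : ℝ} (ha : 0 ≤ a) (hab : a ≤ b) :
    ∃ f : ℝ → ℝ,
      (∀ s, s ∈ Set.Icc 0 (dExc g a b) → 0 ≤ f s) ∧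
      dExc g (f 0) a = 0 ∧ dExc g (f (dExc g a b)) b = 0 ∧
      (∀ s t, s ∈ Set.Icc 0 (dExc g a b) → t ∈ Set.Icc 0 (dExc g a b) →
        dExc g (f s) (f t) = |s - t|) := by
  set m := mExc g a b with hm
  obtain ⟨p, hp, hgp⟩ := mExc_attain hcont a b
  rw [min_eq_left hab, max_eq_right hab] at hp
  have hma : m ≤ g a := mExc_le_left hcont a b
  have hmb : m ≤ g b := mExc_le_right hcont a b
  have hm0 : 0 ≤ m := by rw [hm, ← hgp]; exact hnonneg p (le_trans ha hp.1)
  have hb0 : 0 ≤ b := le_trans ha hab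
  have hDval : dExc g a b = g a + g b - 2 * m := by rw [dExc, ← hm]
  set A := fun h : ℝ => sSup {r | r ∈ Set.Icc 0 a ∧ g r ≤ h} with hA
  set B := fun h : ℝ => sSup {r | r ∈ Set.Icc a b ∧ g r ≤ h} with hB
  have hAbdd : ∀ h : ℝ, BddAbove {r | r ∈ Set.Icc 0 a ∧ g r ≤ h} :=
    fun h => ⟨a, fun r hr => hr.1.2⟩
  have hBbdd : ∀ h : ℝ, BddAbove {r | r ∈ Set.Icc a b ∧ g r ≤ h} :=
    fun h => ⟨b, fun r hr => hr.1.2⟩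
  have hAne : ∀ h : ℝ, 0 ≤ h → {r | r ∈ Set.Icc 0 a ∧ g r ≤ h}.Nonempty :=
    fun h hh => ⟨0, ⟨le_refl 0, ha⟩, by rw [h0]; exact hh⟩
  have hBne : ∀ h : ℝ, m ≤ h → {r | r ∈ Set.Icc a b ∧ g r ≤ h}.Nonempty :=
    fun h hh => ⟨p, hp, by rw [hgp]; exact hh⟩
  have hAL : ∀ h : ℝ, 0 ≤ h → h ≤ g a → A h ∈ Set.Icc 0 a ∧ g (A h) = h ∧
      ∀ u, A h ≤ u → u ≤ a → h ≤ g u := fun h hh0 hha =>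
    level_point hcont ⟨0, ⟨le_refl 0, ha⟩, by rw [h0]; exact hh0⟩ hha
  have hBL : ∀ h : ℝ, m ≤ h → h ≤ g b → B h ∈ Set.Icc a b ∧ g (B h) = h ∧
      ∀ u, B h ≤ u → u ≤ b → h ≤ g u := fun h hhm hhb =>
    level_point hcont ⟨p, hp, by rw [hgp]; exact hhm⟩ hhb
  have dAA : ∀ h₁ h₂ : ℝ, 0 ≤ h₁ → h₁ ≤ h₂ → h₂ ≤ g a →
      dExc g (A h₁) (A h₂) = h₂ - h₁ := by
    intro h₁ h₂ h10 h12 h2a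
    obtain ⟨hx1m, hgx1, hlev1⟩ := hAL h₁ h10 (le_trans h12 h2a)
    obtain ⟨hx2m, hgx2, hlev2⟩ := hAL h₂ (le_trans h10 h12) h2a
    have hle : A h₁ ≤ A h₂ := csSup_le_csSup (hAbdd h₂) (hAne h₁ h10)
      (fun r hr => ⟨hr.1, le_trans hr.2 h12⟩)
    have hmx : mExc g (A h₁) (A h₂) = h₁ := by
      refine le_antisymm (le_trans (mExc_le_left hcont _ _) (le_of_eq hgx1)) (le_mExc ?_)
      intro r hr
      rw [min_eq_left hle, max_eq_right hle] at hr
      exact hlev1 r hr.1 (le_trans hr.2 hx2m.2)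
    rw [dExc, hmx, hgx1, hgx2]; ring
  have dBB : ∀ h₁ h₂ : ℝ, m ≤ h₁ → h₁ ≤ h₂ → h₂ ≤ g b →
      dExc g (B h₁) (B h₂) = h₂ - h₁ := by
    intro h₁ h₂ h1m h12 h2b
    obtain ⟨hx1m, hgx1, hlev1⟩ := hBL h₁ h1m (le_trans h12 h2b)
    obtain ⟨hx2m, hgx2, hlev2⟩ := hBL h₂ (le_trans h1m h12) h2b
    have hle : B h₁ ≤ B h₂ := csSup_le_csSup (hBbdd h₂) (hBne h₁ h1m)
      (fun r hr => ⟨hr.1, le_trans hr.2 h12⟩)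
    have hmx : mExc g (B h₁) (B h₂) = h₁ := by
      refine le_antisymm (le_trans (mExc_le_left hcont _ _) (le_of_eq hgx1)) (le_mExc ?_)
      intro r hr
      rw [min_eq_left hle, max_eq_right hle] at hr
      exact hlev1 r hr.1 (le_trans hr.2 hx2m.2)
    rw [dExc, hmx, hgx1, hgx2]; ring
  have dAB : ∀ h₁ h₂ : ℝ, m ≤ h₁ → h₁ ≤ g a → m ≤ h₂ → h₂ ≤ g b →
      dExc g (A h₁) (B h₂) = h₁ + h₂ - 2 * m := by
    intro h₁ h₂ h1m h1a h2m h2b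
    obtain ⟨hx1m, hgx1, hlev1⟩ := hAL h₁ (le_trans hm0 h1m) h1a
    obtain ⟨hx2m, hgx2, hlev2⟩ := hBL h₂ h2m h2b
    have hle : A h₁ ≤ B h₂ := le_trans hx1m.2 hx2m.1
    have hmx : mExc g (A h₁) (B h₂) = m := by
      refine le_antisymm ?_ (le_mExc ?_)
      · have hpmem : p ∈ Set.Icc (min (A h₁) (B h₂)) (max (A h₁) (B h₂)) := by
          rw [min_eq_left hle, max_eq_right hle]
          exact ⟨le_trans hx1m.2 hp.1,
            le_csSup (hBbdd h₂) ⟨hp, by rw [hgp]; exact h2m⟩⟩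
        rw [hm, ← hgp]
        exact mExc_le hcont hpmem
      · intro r hr
        rw [min_eq_left hle, max_eq_right hle] at hr
        rcases le_total r a with hra | hra
        · exact le_trans h1m (hlev1 r hr.1 hra)
        · have hrb : r ≤ b := le_trans hr.2 hx2m.2
          have hmr : mExc g a b ≤ g r := mExc_le hcont
            ⟨by rw [min_eq_left hab]; exact hra, by rw [max_eq_right hab]; exact hrb⟩
          rw [hm]; exact hmr
    rw [dExc, hmx, hgx1, hgx2]
  have hAtop : A (g a) = a :=
    le_antisymm (csSup_le (hAne _ (hnonneg a ha)) fun r hr => hr.1.2)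
      (le_csSup (hAbdd _) ⟨⟨ha, le_refl a⟩, le_refl (g a)⟩)
  have hBtop : B (g b) = b :=
    le_antisymm (csSup_le (hBne _ hmb) fun r hr => hr.1.2)
      (le_csSup (hBbdd _) ⟨⟨hab, le_refl b⟩, le_refl (g b)⟩)
  refine ⟨fun s => if s ≤ g a - m then A (g a - s) else B (s - g a + 2*m),
    ?_, ?_, ?_, ?_⟩
  · intro s hs
    dsimp only
    split_ifs with hcase
    · exact ((hAL (g a - s) (by linarith) (by linarith [hs.1])).1).1
    · push_neg at hcase
      have hsD := hs.2
      rw [hDval] at hsD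
      exact le_trans ha ((hBL (s - g a + 2*m) (by linarith) (by linarith)).1).1
  · dsimp only
    rw [if_pos (by linarith : (0:ℝ) ≤ g a - m), sub_zero, hAtop]
    exact dExc_self a
  · dsimp only
    by_cases hgb : g b ≤ m
    · have hgbm : g b = m := le_antisymm hgb hmb
      rw [if_pos (by rw [hDval]; linarith : dExc g a b ≤ g a - m)]
      have harg : g a - dExc g a b = m := by rw [hDval, hgbm]; ring
      rw [harg]
      obtain ⟨hxm, hgx, hlev⟩ := hAL m hm0 hma
      have hxb : A m ≤ b := le_trans hxm.2 hab
      have hmx : mExc g (A m) b = m := by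
        refine le_antisymm (le_trans (mExc_le_left hcont _ _) (le_of_eq hgx)) (le_mExc ?_)
        intro r hr
        rw [min_eq_left hxb, max_eq_right hxb] at hr
        rcases le_total r a with hra | hra
        · exact hlev r hr.1 hra
        · have hmr : mExc g a b ≤ g r := mExc_le hcont
            ⟨by rw [min_eq_left hab]; exact hra, by rw [max_eq_right hab]; exact hr.2⟩
          rw [hm]; exact hmr
      rw [dExc, hmx, hgx, hgbm]; ring
    · push_neg at hgb
      rw [if_neg (not_le.2 (by rw [hDval]; linarith : g a - m < dExc g a b))]
      have harg : dExc g a b - g a + 2*m = g b := by rw [hDval]; ring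
      rw [harg, hBtop]
      exact dExc_self b
  · have key : ∀ s t, s ∈ Set.Icc 0 (dExc g a b) → t ∈ Set.Icc 0 (dExc g a b) → s ≤ t →
        dExc g (if s ≤ g a - m then A (g a - s) else B (s - g a + 2*m))
               (if t ≤ g a - m then A (g a - t) else B (t - g a + 2*m)) = t - s := by
      intro s t hs ht hst
      have hsD := hs.2; rw [hDval] at hsD
      have htD := ht.2; rw [hDval] at htD
      by_cases h1 : t ≤ g a - m
      · have h2 : s ≤ g a - m := le_trans hst h1
        rw [if_pos h1, if_pos h2, dExc_comm,
          dAA (g a - t) (g a - s) (by linarith) (by linarith) (by linarith [hs.1])]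
        ring
      · push_neg at h1
        by_cases h2 : s ≤ g a - m
        · rw [if_pos h2, if_neg (not_le.2 h1),
            dAB (g a - s) (t - g a + 2*m) (by linarith) (by linarith [hs.1])
              (by linarith) (by linarith)]
          ring
        · push_neg at h2
          rw [if_neg (not_le.2 h1), if_neg (not_le.2 h2),
            dBB (s - g a + 2*m) (t - g a + 2*m) (by linarith) (by linarith) (by linarith)]
          ring
    intro s t hs ht
    dsimp only
    rcases le_total s t with hst | hst
    · rw [key s t hs ht hst, abs_sub_comm s t, abs_of_nonneg (sub_nonneg.2 hst)]
    · rw [dExc_comm, key t s ht hs hst, abs_of_nonneg (sub_nonneg.2 hst)]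

lemma arc_hits (hcont : Continuous g) {q : ℝ → ℝ} {l r c : ℝ} (hlr : l ≤ r)
    (hqc : ∀ s, s ∈ Set.Icc l r → ∀ ε : ℝ, 0 < ε → ∃ δ : ℝ, 0 < δ ∧
      ∀ t, t ∈ Set.Icc l r → |t - s| < δ → dExc g (q s) (q t) < ε)
    (hsum : dExc g (q l) c + dExc g c (q r) ≤ dExc g (q l) (q r)) :
    ∃ s, s ∈ Set.Icc l r ∧ dExc g (q s) c = 0 := by
  by_contra hcon
  push_neg at hcon
  have hpos : ∀ s, s ∈ Set.Icc l r → 0 < dExc g (q s) c :=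
    fun s hs => lt_of_le_of_ne (dExc_nonneg hcont _ _) (Ne.symm (hcon s hs))
  have trans : ∀ x y z : ℝ,
      dExc g (q x) (q y) < dExc g (q x) c + dExc g (q y) c →
      dExc g (q y) (q z) < dExc g (q y) c + dExc g (q z) c →
      dExc g (q x) (q z) < dExc g (q x) c + dExc g (q z) c := by
    intro x y z hxy hyz
    have h4 := four_point_d hcont (q x) (q z) (q y) c
    have hmax : max (dExc g (q x) (q y) + dExc g (q z) c)
        (dExc g (q x) c + dExc g (q z) (q y)) <
        dExc g (q x) c + dExc g (q y) c + dExc g (q z) c := by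
      refine max_lt (by linarith) ?_
      have := hyz
      rw [dExc_comm (q y) (q z)] at this
      linarith
    linarith
  set S := {t | t ∈ Set.Icc l r ∧
    dExc g (q l) (q t) < dExc g (q l) c + dExc g (q t) c} with hSdef
  have hlS : l ∈ S := ⟨⟨le_refl l, hlr⟩, by
    rw [dExc_self]; linarith [hpos l ⟨le_refl l, hlr⟩]⟩
  have hbdd : BddAbove S := ⟨r, fun t ht => ht.1.2⟩
  have hne : S.Nonempty := ⟨l, hlS⟩
  have hσm : sSup S ∈ Set.Icc l r :=
    ⟨le_csSup hbdd hlS, csSup_le hne fun t ht => ht.1.2⟩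
  set σ := sSup S with hσ
  obtain ⟨δ, hδ, hδp⟩ := hqc σ hσm (dExc g (q σ) c) (hpos σ hσm)
  obtain ⟨t, htS, htσ⟩ : ∃ t ∈ S, σ - δ < t :=
    exists_lt_of_lt_csSup hne (by linarith : σ - δ < σ)
  have htle : t ≤ σ := le_csSup hbdd htS
  have hdtσ : dExc g (q σ) (q t) < dExc g (q σ) c :=
    hδp t htS.1 (by rw [abs_of_nonpos (by linarith)]; linarith)
  have hσS : σ ∈ S := by
    refine ⟨hσm, trans l t σ htS.2 ?_⟩
    have h' := hdtσ
    rw [dExc_comm (q σ) (q t)] at h'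
    have := dExc_nonneg hcont (q t) c
    linarith
  rcases lt_or_eq_of_le hσm.2 with hσr | hσr
  · set t' := min r (σ + δ/2) with ht'
    have hσt' : σ < t' := lt_min hσr (by linarith)
    have ht'm : t' ∈ Set.Icc l r := ⟨le_trans hσm.1 hσt'.le, min_le_left _ _⟩
    have hd : dExc g (q σ) (q t') < dExc g (q σ) c := by
      refine hδp t' ht'm ?_
      rw [abs_of_nonneg (by linarith)]
      have : t' ≤ σ + δ/2 := min_le_right _ _
      linarith
    have ht'S : t' ∈ S := by
      refine ⟨ht'm, trans l σ t' hσS.2 ?_⟩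
      have := dExc_nonneg hcont (q t') c
      linarith
    exact absurd (le_csSup hbdd ht'S) (not_le.2 hσt')
  · have h' := hσS.2
    rw [hσr] at h'
    rw [dExc_comm c (q r)] at hsum
    linarith

lemma geo_dists (hcont : Continuous g) {a b : ℝ} {f : ℝ → ℝ}
    (hf0 : dExc g (f 0) a = 0) (hfD : dExc g (f (dExc g a b)) b = 0)
    (hiso : ∀ s t, s ∈ Set.Icc 0 (dExc g a b) → t ∈ Set.Icc 0 (dExc g a b) →
      dExc g (f s) (f t) = |s - t|)
    {s : ℝ} (hs : s ∈ Set.Icc 0 (dExc g a b)) :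
    dExc g (f s) a = s ∧ dExc g (f s) b = dExc g a b - s := by
  have hD0 : 0 ≤ dExc g a b := dExc_nonneg hcont a b
  have h0m : (0:ℝ) ∈ Set.Icc 0 (dExc g a b) := ⟨le_refl 0, hD0⟩
  have hDm : dExc g a b ∈ Set.Icc 0 (dExc g a b) := ⟨hD0, le_refl _⟩
  constructor
  · calc dExc g (f s) a = dExc g a (f s) := dExc_comm _ _
      _ = dExc g (f 0) (f s) := (dExc_transfer hcont (f s) hf0).symm
      _ = |0 - s| := hiso 0 s h0m hs
      _ = s := by rw [zero_sub, abs_neg, abs_of_nonneg hs.1]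
  · calc dExc g (f s) b = dExc g b (f s) := dExc_comm _ _
      _ = dExc g (f (dExc g a b)) (f s) := (dExc_transfer hcont (f s) hfD).symm
      _ = |dExc g a b - s| := hiso _ s hDm hs
      _ = dExc g a b - s := abs_of_nonneg (sub_nonneg.2 hs.2)

lemma geo_unique (hcont : Continuous g) {a b : ℝ} {f f' : ℝ → ℝ}
    (hf0 : dExc g (f 0) a = 0) (hfD : dExc g (f (dExc g a b)) b = 0)
    (hiso : ∀ s t, s ∈ Set.Icc 0 (dExc g a b) → t ∈ Set.Icc 0 (dExc g a b) →
      dExc g (f s) (f t) = |s - t|)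
    (hf'0 : dExc g (f' 0) a = 0) (hf'D : dExc g (f' (dExc g a b)) b = 0)
    (hiso' : ∀ s t, s ∈ Set.Icc 0 (dExc g a b) → t ∈ Set.Icc 0 (dExc g a b) →
      dExc g (f' s) (f' t) = |s - t|)
    {s : ℝ} (hs : s ∈ Set.Icc 0 (dExc g a b)) :
    dExc g (f s) (f' s) = 0 := by
  obtain ⟨h1a, h1b⟩ := geo_dists hcont hf0 hfD hiso hs
  obtain ⟨h2a, h2b⟩ := geo_dists hcont hf'0 hf'D hiso' hs
  have h4 := four_point_d hcont (f s) (f' s) a b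
  have e1 : dExc g (f s) a + dExc g (f' s) b = dExc g a b := by
    rw [h1a, h2b]; ring
  have e2 : dExc g (f s) b + dExc g (f' s) a = dExc g a b := by
    rw [h1b, h2a]; ring
  rw [e1, e2, max_self] at h4
  exact le_antisymm (by linarith) (dExc_nonneg hcont _ _)

lemma arc_cover (hcont : Continuous g) {a b : ℝ} {f q : ℝ → ℝ}
    (hf0 : dExc g (f 0) a = 0) (hfD : dExc g (f (dExc g a b)) b = 0)
    (hiso : ∀ s t, s ∈ Set.Icc 0 (dExc g a b) → t ∈ Set.Icc 0 (dExc g a b) →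
      dExc g (f s) (f t) = |s - t|)
    (hqcont : ∀ s, s ∈ Set.Icc (0:ℝ) 1 → ∀ ε : ℝ, 0 < ε → ∃ δ : ℝ, 0 < δ ∧
      ∀ t, t ∈ Set.Icc (0:ℝ) 1 → |t - s| < δ → dExc g (q s) (q t) < ε)
    (hq0 : dExc g (q 0) a = 0) (hq1 : dExc g (q 1) b = 0)
    {u : ℝ} (hu : u ∈ Set.Icc 0 (dExc g a b)) :
    ∃ s, s ∈ Set.Icc (0:ℝ) 1 ∧ dExc g (q s) (f u) = 0 := by
  obtain ⟨hfa, hfb⟩ := geo_dists hcont hf0 hfD hiso hu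
  have h1 : dExc g (q 0) (f u) = u := by
    rw [dExc_transfer hcont (f u) hq0, dExc_comm, hfa]
  have h2 : dExc g (f u) (q 1) = dExc g a b - u := by
    rw [dExc_comm, dExc_transfer hcont (f u) hq1, dExc_comm, hfb]
  have h3 : dExc g (q 0) (q 1) = dExc g a b := by
    rw [dExc_transfer hcont (q 1) hq0, dExc_comm a (q 1),
      dExc_transfer hcont a hq1, dExc_comm]
  exact arc_hits hcont zero_le_one hqcont (by rw [h1, h2, h3]; ring_nf; exact le_refl _)

lemma arc_range (hcont : Continuous g) {a b : ℝ} {f q : ℝ → ℝ}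
    (hf0 : dExc g (f 0) a = 0) (hfD : dExc g (f (dExc g a b)) b = 0)
    (hiso : ∀ s t, s ∈ Set.Icc 0 (dExc g a b) → t ∈ Set.Icc 0 (dExc g a b) →
      dExc g (f s) (f t) = |s - t|)
    (hqcont : ∀ s, s ∈ Set.Icc (0:ℝ) 1 → ∀ ε : ℝ, 0 < ε → ∃ δ : ℝ, 0 < δ ∧
      ∀ t, t ∈ Set.Icc (0:ℝ) 1 → |t - s| < δ → dExc g (q s) (q t) < ε)
    (hqinj : ∀ s t, s ∈ Set.Icc (0:ℝ) 1 → t ∈ Set.Icc (0:ℝ) 1 →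
      dExc g (q s) (q t) = 0 → s = t)
    (hq0 : dExc g (q 0) a = 0) (hq1 : dExc g (q 1) b = 0)
    {s₀ : ℝ} (hs₀ : s₀ ∈ Set.Icc (0:ℝ) 1) :
    ∃ u, u ∈ Set.Icc 0 (dExc g a b) ∧ dExc g (q s₀) (f u) = 0 := by
  have hD0 : 0 ≤ dExc g a b := dExc_nonneg hcont a b
  set α := dExc g (q s₀) a with hα
  set β := dExc g (q s₀) b with hβ
  have hα0 : 0 ≤ α := dExc_nonneg hcont _ _
  have hβ0 : 0 ≤ β := dExc_nonneg hcont _ _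
  have htri1 : dExc g a b ≤ α + β := by
    have := dExc_triangle hcont a (q s₀) b
    rw [dExc_comm a (q s₀)] at this
    rw [hα, hβ]; linarith
  have htri2 : α ≤ dExc g a b + β := by
    have := dExc_triangle hcont (q s₀) b a
    rw [dExc_comm b a] at this
    rw [hα, hβ]; linarith
  have htri3 : β ≤ dExc g a b + α := by
    have := dExc_triangle hcont (q s₀) a b
    rw [hα, hβ]; linarith
  set u₀ := (α - β + dExc g a b)/2 with hu₀
  have hu0m : u₀ ∈ Set.Icc 0 (dExc g a b) :=
    ⟨by rw [hu₀]; linarith, by rw [hu₀]; linarith⟩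
  obtain ⟨hfa, hfb⟩ := geo_dists hcont hf0 hfD hiso hu0m
  set Y := (α + β - dExc g a b)/2 with hY
  have hY0 : 0 ≤ Y := by rw [hY]; linarith
  have hxc : dExc g (q s₀) (f u₀) ≤ Y := by
    have h4 := four_point_d hcont (q s₀) (f u₀) a b
    have e1 : dExc g (q s₀) a + dExc g (f u₀) b = Y + dExc g a b := by
      rw [← hα, hfb, hY, hu₀]; ring
    have e2 : dExc g (q s₀) b + dExc g (f u₀) a = Y + dExc g a b := by
      rw [← hβ, hfa, hY, hu₀]; ring
    rw [e1, e2, max_self] at h4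
    linarith
  have hq01 : ∀ s, s ∈ Set.Icc (0:ℝ) s₀ → s ∈ Set.Icc (0:ℝ) 1 :=
    fun s hs => ⟨hs.1, le_trans hs.2 hs₀.2⟩
  have hq02 : ∀ s, s ∈ Set.Icc s₀ (1:ℝ) → s ∈ Set.Icc (0:ℝ) 1 :=
    fun s hs => ⟨le_trans hs₀.1 hs.1, hs.2⟩
  have hcont1 : ∀ s, s ∈ Set.Icc (0:ℝ) s₀ → ∀ ε : ℝ, 0 < ε → ∃ δ : ℝ, 0 < δ ∧
      ∀ t, t ∈ Set.Icc (0:ℝ) s₀ → |t - s| < δ → dExc g (q s) (q t) < ε := by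
    intro s hs ε hε
    obtain ⟨δ, hδ, hδp⟩ := hqcont s (hq01 s hs) ε hε
    exact ⟨δ, hδ, fun t ht h => hδp t (hq01 t ht) h⟩
  have hcont2 : ∀ s, s ∈ Set.Icc s₀ (1:ℝ) → ∀ ε : ℝ, 0 < ε → ∃ δ : ℝ, 0 < δ ∧
      ∀ t, t ∈ Set.Icc s₀ (1:ℝ) → |t - s| < δ → dExc g (q s) (q t) < ε := by
    intro s hs ε hε
    obtain ⟨δ, hδ, hδp⟩ := hqcont s (hq02 s hs) ε hε
    exact ⟨δ, hδ, fun t ht h => hδp t (hq02 t ht) h⟩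
  have hsum1 : dExc g (q 0) (f u₀) + dExc g (f u₀) (q s₀) ≤ dExc g (q 0) (q s₀) := by
    have e0 : dExc g (q 0) (f u₀) = u₀ := by
      rw [dExc_transfer hcont (f u₀) hq0, dExc_comm, hfa]
    have e1 : dExc g (q 0) (q s₀) = α := by
      rw [dExc_transfer hcont (q s₀) hq0, dExc_comm]
    have e2 : dExc g (f u₀) (q s₀) ≤ Y := by rw [dExc_comm]; exact hxc
    rw [e0, e1, hu₀, hY] at *
    linarith
  have hsum2 : dExc g (q s₀) (f u₀) + dExc g (f u₀) (q 1) ≤ dExc g (q s₀) (q 1) := by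
    have e1 : dExc g (f u₀) (q 1) = dExc g a b - u₀ := by
      rw [dExc_comm, dExc_transfer hcont (f u₀) hq1, dExc_comm, hfb]
    have e2 : dExc g (q s₀) (q 1) = β := by
      rw [dExc_comm (q s₀) (q 1), dExc_transfer hcont (q s₀) hq1, dExc_comm]
    rw [e1, e2]
    rw [hu₀, hY] at hxc
    rw [hu₀]
    linarith
  obtain ⟨s₁, hs₁m, hs₁⟩ := arc_hits hcont hs₀.1 hcont1 hsum1
  obtain ⟨s₂, hs₂m, hs₂⟩ := arc_hits hcont hs₀.2 hcont2 hsum2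
  have h12 : dExc g (q s₁) (q s₂) = 0 := by
    have t := dExc_triangle hcont (q s₁) (f u₀) (q s₂)
    have hn := dExc_nonneg hcont (q s₁) (q s₂)
    have h2' : dExc g (f u₀) (q s₂) = 0 := by rw [dExc_comm]; exact hs₂
    linarith [hs₁]
  have hseq : s₁ = s₂ := hqinj s₁ s₂ (hq01 s₁ hs₁m) (hq02 s₂ hs₂m) h12
  have hs01 : s₀ = s₁ := le_antisymm (hseq ▸ hs₂m.1) hs₁m.2
  exact ⟨u₀, hu0m, by rw [hs01]; exact hs₁⟩

end Basic

theorem coded_real_tree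
    (g : ℝ → ℝ) (hcont : Continuous g)
    (hnonneg : ∀ x, 0 ≤ x → 0 ≤ g x) (h0 : g 0 = 0)
    (hsupp : ∃ x₀ : ℝ, 0 < x₀ ∧ ∀ x, x₀ ≤ x → g x = 0)
    (hne : ∃ x, 0 ≤ x ∧ g x ≠ 0) :
    -- `d_g` is a pseudometric on `[0,∞)`
    (∀ a, 0 ≤ a → dExc g a a = 0) ∧
    (∀ a b, 0 ≤ a → 0 ≤ b → 0 ≤ dExc g a b ∧ dExc g a b = dExc g b a) ∧
    (∀ a b c, 0 ≤ a → 0 ≤ b → 0 ≤ c → dExc g a c ≤ dExc g a b + dExc g b c) ∧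
    -- the quotient `T_g` is a (rooted) real tree:
    ∀ a b, 0 ≤ a → 0 ≤ b →
      ∃ f : ℝ → ℝ,
        -- a geodesic segment from `[a]` to `[b]` …
        (∀ s, s ∈ Set.Icc 0 (dExc g a b) → 0 ≤ f s) ∧
        dExc g (f 0) a = 0 ∧ dExc g (f (dExc g a b)) b = 0 ∧
        (∀ s t, s ∈ Set.Icc 0 (dExc g a b) → t ∈ Set.Icc 0 (dExc g a b) →
          dExc g (f s) (f t) = |s - t|) ∧
        -- … which is unique (as a map into the quotient) …
        (∀ f' : ℝ → ℝ,
          (∀ s, s ∈ Set.Icc 0 (dExc g a b) → 0 ≤ f' s) →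
          dExc g (f' 0) a = 0 → dExc g (f' (dExc g a b)) b = 0 →
          (∀ s t, s ∈ Set.Icc 0 (dExc g a b) → t ∈ Set.Icc 0 (dExc g a b) →
            dExc g (f' s) (f' t) = |s - t|) →
          ∀ s, s ∈ Set.Icc 0 (dExc g a b) → dExc g (f s) (f' s) = 0) ∧
        -- … and every continuous injective arc in `T_g` from `[a]` to `[b]` has the
        -- same range as this segment (up to the identification `∼`).
        ∀ q : ℝ → ℝ,
          (∀ s, s ∈ Set.Icc (0:ℝ) 1 → 0 ≤ q s) →
          -- `q` is continuous as a map into the quotient metric space `T_g`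
          (∀ s, s ∈ Set.Icc (0:ℝ) 1 → ∀ ε : ℝ, 0 < ε → ∃ δ : ℝ, 0 < δ ∧
            ∀ t, t ∈ Set.Icc (0:ℝ) 1 → |t - s| < δ → dExc g (q s) (q t) < ε) →
          -- `q` is injective as a map into the quotient
          (∀ s t, s ∈ Set.Icc (0:ℝ) 1 → t ∈ Set.Icc (0:ℝ) 1 →
            dExc g (q s) (q t) = 0 → s = t) →
          dExc g (q 0) a = 0 → dExc g (q 1) b = 0 →
          (∀ s, s ∈ Set.Icc (0:ℝ) 1 →
            ∃ u, u ∈ Set.Icc 0 (dExc g a b) ∧ dExc g (q s) (f u) = 0) ∧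
          ∀ u, u ∈ Set.Icc 0 (dExc g a b) →
            ∃ s, s ∈ Set.Icc (0:ℝ) 1 ∧ dExc g (q s) (f u) = 0 := by
  refine ⟨fun a _ => dExc_self a,
    fun a b _ _ => ⟨dExc_nonneg hcont a b, dExc_comm a b⟩,
    fun a b c _ _ _ => dExc_triangle hcont a b c, ?_⟩
  intro a b ha hb
  have hgeo : ∃ f : ℝ → ℝ,
      (∀ s, s ∈ Set.Icc 0 (dExc g a b) → 0 ≤ f s) ∧
      dExc g (f 0) a = 0 ∧ dExc g (f (dExc g a b)) b = 0 ∧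
      (∀ s t, s ∈ Set.Icc 0 (dExc g a b) → t ∈ Set.Icc 0 (dExc g a b) →
        dExc g (f s) (f t) = |s - t|) := by
    rcases le_total a b with hab | hab
    · obtain ⟨f, h1, h2, h3, h4⟩ := geodesic_exists hcont hnonneg h0 ha hab
      exact ⟨f, fun s hs => h1 s hs, h2, h3, h4⟩
    · obtain ⟨f', h1, h2, h3, h4⟩ := geodesic_exists hcont hnonneg h0 hb hab
      have hddc : dExc g a b = dExc g b a := dExc_comm a b
      refine ⟨fun s => f' (dExc g a b - s), ?_, ?_, ?_, ?_⟩
      · intro s hs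
        exact h1 _ ⟨by linarith [hs.2], by rw [← hddc]; linarith [hs.1]⟩
      · show dExc g (f' (dExc g a b - 0)) a = 0
        rw [sub_zero, hddc]
        exact h3
      · show dExc g (f' (dExc g a b - dExc g a b)) b = 0
        rw [sub_self]
        exact h2
      · intro s t hs ht
        show dExc g (f' (dExc g a b - s)) (f' (dExc g a b - t)) = |s - t|
        have hm1 : dExc g a b - s ∈ Set.Icc 0 (dExc g b a) :=
          ⟨by linarith [hs.2], by rw [← hddc]; linarith [hs.1]⟩
        have hm2 : dExc g a b - t ∈ Set.Icc 0 (dExc g b a) :=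
          ⟨by linarith [ht.2], by rw [← hddc]; linarith [ht.1]⟩
        rw [h4 _ _ hm1 hm2]
        have e : dExc g a b - s - (dExc g a b - t) = t - s := by ring
        rw [e, abs_sub_comm]
  obtain ⟨f, hfpos, hf0, hfD, hiso⟩ := hgeo
  refine ⟨f, hfpos, hf0, hfD, hiso, ?_, ?_⟩
  · intro f' _ h2' h3' h4' s hs
    exact geo_unique hcont hf0 hfD hiso h2' h3' h4' hs
  · intro q _ hqcont hqinj hq0 hq1
    exact ⟨fun s hs => arc_range hcont hf0 hfD hiso hqcont hqinj hq0 hq1 hs,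
      fun u hu => arc_cover hcont hf0 hfD hiso hqcont hq0 hq1 hu⟩
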